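/- Let n ≥ 1, let q be a real number with 1 ≤ q < ∞, and let i ∈ {1,…,n}. If u : ℝ^n → ℝ is continuously differentiable, u belongs to L^q(ℝ^n), and the partial derivative ∂u/∂x_i is integrable on ℝ^n, then ∫_{ℝ^n} (∂u/∂x_i)(x) dx = 0. -/

import Mathlib

/-!
On each line parallel to the direction of differentiation, the integral of the derivative is the
difference of the limits of the function at `±∞`. These limits exist because the derivative is
integrable, and they vanish because a function with a nonzero limit at infinity is not in `Lᵖ`
for `p < ∞`. A linear change of variables makes the direction a coordinate axis, and Fubini
integrates over all lines.
-/

open MeasureTheory Measure Filter Topology Module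
open scoped ENNReal

namespace MeasureTheory

variable {F : Type*} [NormedAddCommGroup F] {p : ℝ≥0∞}

theorem MemLp.eq_zero_of_tendsto {α : Type*} [MeasurableSpace α] {μ : Measure α} {f : α → F}
    {l : Filter α} {a : F} (hp0 : p ≠ 0) (hpt : p ≠ ∞) (hf : MemLp f p μ)
    (hl : ∀ s ∈ l, μ s = ∞) (ha : Tendsto f l (𝓝 a)) : a = 0 := by
  by_contra ha0
  have hc : ‖a‖₊ / 2 ≠ 0 := by simpa using ha0
  have hlarge : {x | ‖a‖₊ / 2 ≤ ‖f x‖₊} ∈ l :=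
    ha.nnnorm.eventually (eventually_ge_nhds (NNReal.half_lt_self (nnnorm_ne_zero_iff.2 ha0)))
  exact (hf.meas_ge_lt_top hp0 hpt hc).ne (hl _ hlarge)

theorem MemLp.prod_right_ae {α β : Type*} [MeasurableSpace α] [MeasurableSpace β]
    {μ : Measure α} {ν : Measure β} [SFinite μ] [SFinite ν] {f : α × β → F}
    (hp0 : p ≠ 0) (hpt : p ≠ ∞) (hf : MemLp f p (μ.prod ν)) :
    ∀ᵐ x ∂μ, MemLp (fun y => f (x, y)) p ν := by
  filter_upwards [(hf.integrable_norm_rpow hp0 hpt).prod_right_ae, hf.1.prodMk_left]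
    with x hint hmeas
  exact (integrable_norm_rpow_iff hmeas hp0 hpt).1 hint

end MeasureTheory

theorem Real.volume_eq_top_of_mem_atTop {s : Set ℝ} (hs : s ∈ atTop) : volume s = ∞ := by
  obtain ⟨a, ha⟩ := mem_atTop_sets.1 hs
  exact top_unique (Real.volume_Ici.symm.le.trans (measure_mono fun x hx => ha x hx))

theorem Real.volume_eq_top_of_mem_atBot {s : Set ℝ} (hs : s ∈ atBot) : volume s = ∞ := by
  obtain ⟨a, ha⟩ := mem_atBot_sets.1 hs
  exact top_unique (Real.volume_Iic.symm.le.trans (measure_mono fun x hx => ha x hx))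

section LineDerivative

variable {E F : Type*} [NormedAddCommGroup E] [NormedSpace ℝ E] [NormedAddCommGroup F]
  [NormedSpace ℝ F]

theorem ContinuousLinearEquiv.exists_prod_real_apply_eq [FiniteDimensional ℝ E] {v : E}
    (hv : v ≠ 0) :
    ∃ L : E ≃L[ℝ] (Fin (finrank ℝ E - 1) → ℝ) × ℝ, L v = (0, 1) := by
  have : Nontrivial E := ⟨v, 0, hv⟩
  have hdim : finrank ℝ ((Fin (finrank ℝ E - 1) → ℝ) × ℝ) = finrank ℝ E := by
    simpa using Nat.sub_add_cancel finrank_pos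
  let L₀ := (ContinuousLinearEquiv.ofFinrankEq hdim).symm
  obtain ⟨M, hM⟩ := SeparatingDual.exists_continuousLinearEquiv_apply_eq (R := ℝ)
    (L₀.map_ne_zero_iff.2 hv) (by simp : ((0, 1) : (Fin (finrank ℝ E - 1) → ℝ) × ℝ) ≠ 0)
  exact ⟨L₀.trans M, hM⟩

theorem HasLineDerivAt.hasDerivAt_comp_symm_prodMk {X : Type*} [NormedAddCommGroup X]
    [NormedSpace ℝ X] {f : E → F} {f' : F} {v : E} {L : E ≃L[ℝ] X × ℝ} (hL : L v = (0, 1))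
    {x : X} {t : ℝ} (h : HasLineDerivAt ℝ f f' (L.symm (x, t)) v) :
    HasDerivAt (fun s => f (L.symm (x, s))) f' t := by
  refine (HasDerivAt.comp_sub_const t t (by rwa [sub_self])).congr_of_eventuallyEq
    (Eventually.of_forall fun s => congrArg f ?_)
  apply L.injective
  simp [hL]

variable [CompleteSpace F] {p : ℝ≥0∞}

theorem integral_eq_zero_of_hasDerivAt_of_memLp {f f' : ℝ → F} (hp0 : p ≠ 0) (hpt : p ≠ ∞)
    (hderiv : ∀ x, HasDerivAt f (f' x) x) (hf' : Integrable f') (hf : MemLp f p) :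
    ∫ x, f' x = 0 := by
  have hbot := tendsto_limUnder_of_hasDerivAt_of_integrableOn_Iic (a := 0)
    (fun x _ => hderiv x) hf'.integrableOn
  have htop := tendsto_limUnder_of_hasDerivAt_of_integrableOn_Ioi (a := 0)
    (fun x _ => hderiv x) hf'.integrableOn
  rw [integral_of_hasDerivAt_of_tendsto hderiv hf' hbot htop,
    hf.eq_zero_of_tendsto hp0 hpt (fun _ => Real.volume_eq_top_of_mem_atBot) hbot,
    hf.eq_zero_of_tendsto hp0 hpt (fun _ => Real.volume_eq_top_of_mem_atTop) htop, sub_zero]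

theorem integral_prod_eq_zero_of_hasDerivAt_of_memLp {α : Type*} [MeasurableSpace α]
    {μ : Measure α} [SFinite μ] {f f' : α × ℝ → F} (hp0 : p ≠ 0) (hpt : p ≠ ∞)
    (hderiv : ∀ x t, HasDerivAt (fun s => f (x, s)) (f' (x, t)) t)
    (hf' : Integrable f' (μ.prod volume)) (hf : MemLp f p (μ.prod volume)) :
    ∫ z, f' z ∂(μ.prod volume) = 0 := by
  rw [integral_prod _ hf']
  refine (integral_congr_ae ?_).trans (integral_zero α F)
  filter_upwards [hf'.prod_right_ae, hf.prod_right_ae hp0 hpt] with x hf'x hfx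
  exact integral_eq_zero_of_hasDerivAt_of_memLp hp0 hpt (hderiv x) hf'x hfx

theorem integral_eq_zero_of_hasLineDerivAt_of_memLp [FiniteDimensional ℝ E]
    [MeasurableSpace E] [BorelSpace E] {μ : Measure E} [IsAddHaarMeasure μ]
    {f f' : E → F} {v : E} (hp0 : p ≠ 0) (hpt : p ≠ ∞)
    (hderiv : ∀ x, HasLineDerivAt ℝ f (f' x) x v) (hf' : Integrable f' μ) (hf : MemLp f p μ) :
    ∫ x, f' x ∂μ = 0 := by
  rcases eq_or_ne v 0 with rfl | hv
  · have hzero (x : E) : f' x = 0 := (hderiv x).lineDeriv.symm.trans (by simp [lineDeriv])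
    simp [hzero]
  obtain ⟨L, hL⟩ := ContinuousLinearEquiv.exists_prod_real_apply_eq hv
  have hemb : MeasurableEmbedding L := L.toHomeomorph.measurableEmbedding
  have hprod : μ.map L = (addHaarScalarFactor (μ.map L) (volume.prod volume) • volume).prod
      (volume : Measure ℝ) := by
    rw [prod_smul_left]
    exact isAddLeftInvariant_eq_smul _ _
  have hmap : ∫ y, f' (L.symm y) ∂(μ.map L) = ∫ x, f' x ∂μ := by
    simpa using hemb.integral_map (fun y => f' (L.symm y))
  rw [← hmap, hprod]
  refine integral_prod_eq_zero_of_hasDerivAt_of_memLp (f := fun y => f (L.symm y)) hp0 hpt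
    (fun x t => (hderiv _).hasDerivAt_comp_symm_prodMk hL) ?_ ?_
  · rw [← hprod, hemb.integrable_map_iff]
    simpa [Function.comp_def] using hf'
  · rw [← hprod, hemb.memLp_map_measure_iff]
    simpa [Function.comp_def] using hf

end LineDerivative

theorem integral_partialDeriv_eq_zero_of_memLp_general
    (n : ℕ) (q : ℝ) (hq : 1 ≤ q) (i : Fin n)
    (u : EuclideanSpace ℝ (Fin n) → ℝ) (hu : ContDiff ℝ 1 u)
    (huq : MemLp u (ENNReal.ofReal q) volume)
    (hint : Integrable (fun x => fderiv ℝ u x (EuclideanSpace.single i 1)) volume) :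
    ∫ x : EuclideanSpace ℝ (Fin n), fderiv ℝ u x (EuclideanSpace.single i 1) = 0 := by
  have hq0 : ENNReal.ofReal q ≠ 0 := by simpa using zero_lt_one.trans_le hq
  exact integral_eq_zero_of_hasLineDerivAt_of_memLp hq0 ENNReal.ofReal_ne_top
    (fun x => ((hu.differentiable one_ne_zero) x).hasFDerivAt.hasLineDerivAt _) hint huq

/-- If `u : ℝⁿ → ℝ` is continuously differentiable, belongs to `L^q` for some
`1 ≤ q < ∞`, and its `i`-th partial derivative is integrable, then
`∫ ∂u/∂xᵢ = 0`. -/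
theorem integral_partialDeriv_eq_zero_of_memLp
    (n : ℕ) (hn : 1 ≤ n) (q : ℝ) (hq : 1 ≤ q) (i : Fin n)
    (u : EuclideanSpace ℝ (Fin n) → ℝ) (hu : ContDiff ℝ 1 u)
    (huq : MemLp u (ENNReal.ofReal q) volume)
    (hint : Integrable (fun x => fderiv ℝ u x (EuclideanSpace.single i 1)) volume) :
    ∫ x : EuclideanSpace ℝ (Fin n), fderiv ℝ u x (EuclideanSpace.single i 1) = 0 :=
  integral_partialDeriv_eq_zero_of_memLp_general n q hq i u hu huq hint
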